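/- Let b, r ∈ ℝ with b ≠ 0. Suppose α, α₄, β, γ : ℝ × ℝ → ℝ are smooth (C^∞) functions of (s,t) satisfying, at every point of ℝ²: (i) ∂_s β = 2αβ − 2bα₄; (ii) ∂_s γ = −2αγ + 2bα₄; (iii) ∂_s α = b(γ − β); (iv) α² + b(β + γ) = r; (v) ∂_t α = ∂_s α₄. Then the function w(x,t) := α(x + 2rt, −4b² t) satisfies the defocusing mKdV equation ∂_t w + ∂_x^3 w − 6 w^2 ∂_x w = 0 at every point of ℝ². -/

import Mathlib

/-- Partial derivative in the first variable (s, resp. x). -/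
noncomputable def pdx (u : ℝ × ℝ → ℝ) : ℝ × ℝ → ℝ :=
  fun p => deriv (fun x => u (x, p.2)) p.1

/-- Partial derivative in the second variable (t). -/
noncomputable def pdt (u : ℝ × ℝ → ℝ) : ℝ × ℝ → ℝ :=
  fun p => deriv (fun t => u (p.1, t)) p.2

lemma pdx_eq_fderiv (u : ℝ × ℝ → ℝ) (hu : Differentiable ℝ u) (p : ℝ × ℝ) :
    pdx u p = fderiv ℝ u p ((1 : ℝ), (0 : ℝ)) := by
  have hinner : HasDerivAt (fun x : ℝ => (x, p.2)) ((1 : ℝ), (0 : ℝ)) p.1 :=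
    (hasDerivAt_id p.1).prodMk (hasDerivAt_const p.1 p.2)
  have h := ((hu (p.1, p.2)).hasFDerivAt).comp_hasDerivAt p.1 hinner
  simpa [pdx, Function.comp_def] using h.deriv

lemma pdt_eq_fderiv (u : ℝ × ℝ → ℝ) (hu : Differentiable ℝ u) (p : ℝ × ℝ) :
    pdt u p = fderiv ℝ u p ((0 : ℝ), (1 : ℝ)) := by
  have hinner : HasDerivAt (fun t : ℝ => (p.1, t)) ((0 : ℝ), (1 : ℝ)) p.2 :=
    (hasDerivAt_const p.2 p.1).prodMk (hasDerivAt_id p.2)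
  have h := ((hu (p.1, p.2)).hasFDerivAt).comp_hasDerivAt p.2 hinner
  simpa [pdt, Function.comp_def] using h.deriv

lemma contDiff_pdx (u : ℝ × ℝ → ℝ) (hu : ContDiff ℝ (⊤ : ℕ∞) u) : ContDiff ℝ (⊤ : ℕ∞) (pdx u) := by
  have : pdx u = fun p => fderiv ℝ u p ((1 : ℝ), (0 : ℝ)) :=
    funext fun p => pdx_eq_fderiv u (hu.differentiable (by simp)) p
  rw [this]
  exact (hu.fderiv_right (by simp)).clm_apply contDiff_const

lemma pdx_comp (c d : ℝ) (u : ℝ × ℝ → ℝ) (hu : ContDiff ℝ (⊤ : ℕ∞) u) :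
    pdx (fun q : ℝ × ℝ => u (q.1 + c * q.2, d * q.2))
      = fun p : ℝ × ℝ => pdx u (p.1 + c * p.2, d * p.2) := by
  funext p
  have hd : Differentiable ℝ u := hu.differentiable (by simp)
  have hinner : HasDerivAt (fun x : ℝ => (x + c * p.2, d * p.2)) ((1 : ℝ), (0 : ℝ)) p.1 :=
    ((hasDerivAt_id p.1).add_const _).prodMk (hasDerivAt_const _ _)
  have h := ((hd (p.1 + c * p.2, d * p.2)).hasFDerivAt).comp_hasDerivAt p.1 hinner
  rw [pdx_eq_fderiv u hd]
  simpa [pdx, Function.comp_def] using h.deriv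

lemma pdt_comp (c d : ℝ) (u : ℝ × ℝ → ℝ) (hu : ContDiff ℝ (⊤ : ℕ∞) u) (p : ℝ × ℝ) :
    pdt (fun q : ℝ × ℝ => u (q.1 + c * q.2, d * q.2)) p
      = c * pdx u (p.1 + c * p.2, d * p.2) + d * pdt u (p.1 + c * p.2, d * p.2) := by
  have hd : Differentiable ℝ u := hu.differentiable (by simp)
  have h1 : HasDerivAt (fun t : ℝ => p.1 + c * t) c p.2 := by
    simpa using ((hasDerivAt_id p.2).const_mul c).const_add p.1
  have h2 : HasDerivAt (fun t : ℝ => d * t) d p.2 := by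
    simpa using (hasDerivAt_id p.2).const_mul d
  have hinner : HasDerivAt (fun t : ℝ => (p.1 + c * t, d * t)) ((c : ℝ), (d : ℝ)) p.2 :=
    h1.prodMk h2
  have h := ((hd (p.1 + c * p.2, d * p.2)).hasFDerivAt).comp_hasDerivAt p.2 hinner
  have hv : ((c : ℝ), (d : ℝ)) = c • ((1 : ℝ), (0 : ℝ)) + d • ((0 : ℝ), (1 : ℝ)) := by
    simp [Prod.ext_iff]
  have hder : pdt (fun q : ℝ × ℝ => u (q.1 + c * q.2, d * q.2)) p
      = fderiv ℝ u (p.1 + c * p.2, d * p.2) ((c : ℝ), (d : ℝ)) := by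
    simpa [pdt, Function.comp_def] using h.deriv
  rw [hder, hv, map_add, map_smul, map_smul, smul_eq_mul, smul_eq_mul,
    ← pdx_eq_fderiv u hd, ← pdt_eq_fderiv u hd]

lemma hasDerivAt_slice (u : ℝ × ℝ → ℝ) (hu : ContDiff ℝ (⊤ : ℕ∞) u) (p : ℝ × ℝ) :
    HasDerivAt (fun x => u (x, p.2)) (pdx u p) p.1 := by
  have : DifferentiableAt ℝ (fun x => u (x, p.2)) p.1 :=
    ((hu.differentiable (by simp)) (p.1, p.2)).comp p.1
      (differentiableAt_id.prodMk (differentiableAt_const _))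
  exact this.hasDerivAt

/-- From the stationary and evolutionary flow equations (i)–(iii), (v) of the
mKdV hierarchy and the orbit constraint (iv), the function
`w(x,t) := α(x + 2rt, −4b²t)` satisfies the defocusing mKdV equation
`∂ₜ w + ∂ₓ³ w − 6 w² ∂ₓ w = 0` at every point of ℝ². -/
theorem defocusing_mKdV_from_flows (b r : ℝ) (hb : b ≠ 0)
    (α α₄ β γ : ℝ × ℝ → ℝ)
    (hα : ContDiff ℝ (⊤ : ℕ∞) α) (hα₄ : ContDiff ℝ (⊤ : ℕ∞) α₄)
    (hβ : ContDiff ℝ (⊤ : ℕ∞) β) (hγ : ContDiff ℝ (⊤ : ℕ∞) γ)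
    (h1 : ∀ p : ℝ × ℝ, pdx β p = 2 * α p * β p - 2 * b * α₄ p)
    (h2 : ∀ p : ℝ × ℝ, pdx γ p = -2 * α p * γ p + 2 * b * α₄ p)
    (h3 : ∀ p : ℝ × ℝ, pdx α p = b * (γ p - β p))
    (h4 : ∀ p : ℝ × ℝ, (α p) ^ 2 + b * (β p + γ p) = r)
    (h5 : ∀ p : ℝ × ℝ, pdt α p = pdx α₄ p) :
    ∀ p : ℝ × ℝ,
      pdt (fun q => α (q.1 + 2 * r * q.2, -4 * b ^ 2 * q.2)) p
        + pdx (pdx (pdx (fun q => α (q.1 + 2 * r * q.2, -4 * b ^ 2 * q.2)))) p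
        - 6 * (α (p.1 + 2 * r * p.2, -4 * b ^ 2 * p.2)) ^ 2
            * pdx (fun q => α (q.1 + 2 * r * q.2, -4 * b ^ 2 * q.2)) p = 0 := by
  -- second s-derivative of α
  have A2 : ∀ p : ℝ × ℝ,
      pdx (pdx α) p = 2 * (α p) ^ 3 - 2 * r * α p + 4 * b ^ 2 * α₄ p := by
    intro p
    have hfun : pdx α = fun p => b * (γ p - β p) := funext h3
    rw [hfun]
    have hg := hasDerivAt_slice γ hγ p
    have hbb := hasDerivAt_slice β hβ p
    have h : HasDerivAt (fun x => b * (γ (x, p.2) - β (x, p.2)))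
        (b * (pdx γ p - pdx β p)) p.1 := (hg.sub hbb).const_mul b
    have hder : pdx (fun p : ℝ × ℝ => b * (γ p - β p)) p = b * (pdx γ p - pdx β p) := by
      simpa [pdx] using h.deriv
    rw [hder, h1 p, h2 p]
    linear_combination (-2 * α p) * h4 p
  -- third s-derivative of α
  have A3 : ∀ p : ℝ × ℝ,
      pdx (pdx (pdx α)) p
        = 6 * (α p) ^ 2 * pdx α p - 2 * r * pdx α p + 4 * b ^ 2 * pdx α₄ p := by
    intro p
    have hfun : pdx (pdx α)
        = fun p => 2 * (α p) ^ 3 - 2 * r * α p + 4 * b ^ 2 * α₄ p := funext A2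
    rw [hfun]
    have hA := hasDerivAt_slice α hα p
    have hA4 := hasDerivAt_slice α₄ hα₄ p
    have h : HasDerivAt
        (fun x => 2 * (α (x, p.2)) ^ 3 - 2 * r * α (x, p.2) + 4 * b ^ 2 * α₄ (x, p.2))
        (2 * ((3 : ℕ) * (α p) ^ 2 * pdx α p) - 2 * r * pdx α p + 4 * b ^ 2 * pdx α₄ p)
        p.1 := (((hA.pow 3).const_mul 2).sub (hA.const_mul (2 * r))).add
          (hA4.const_mul (4 * b ^ 2))
    have hder : pdx (fun p : ℝ × ℝ =>
        2 * (α p) ^ 3 - 2 * r * α p + 4 * b ^ 2 * α₄ p) p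
        = 2 * ((3 : ℕ) * (α p) ^ 2 * pdx α p) - 2 * r * pdx α p + 4 * b ^ 2 * pdx α₄ p := by
      simpa [pdx] using h.deriv
    rw [hder]
    push_cast
    ring
  intro p
  rw [pdt_comp (2 * r) (-4 * b ^ 2) α hα p,
    pdx_comp (2 * r) (-4 * b ^ 2) α hα,
    pdx_comp (2 * r) (-4 * b ^ 2) (pdx α) (contDiff_pdx α hα),
    pdx_comp (2 * r) (-4 * b ^ 2) (pdx (pdx α)) (contDiff_pdx (pdx α) (contDiff_pdx α hα))]
  beta_reduce
  set q : ℝ × ℝ := (p.1 + 2 * r * p.2, -4 * b ^ 2 * p.2) with hq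
  rw [A3 q, h5 q]
  ring
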